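/- arXiv:2008.05345 — 4 statements merged into one kernel-verified Lean document; each statement's English description precedes it below -/
import Mathlib

section
/- Let G be a graph, U its set of universal vertices, and k a positive integer. The k-tuple domination number of G equals k if and only if |U| ≥ k. -/
/-! A k-tuple dominating set with exactly k vertices must be contained in every closed
neighbourhood, i.e. consist of universal vertices; conversely, any k universal vertices lie in
every closed neighbourhood, and no k-tuple dominating set has fewer than k vertices. -/

open Set

def closedNbhd {V : Type*} (G : SimpleGraph V) (v : V) : Set V :=
  insert v (G.neighborSet v)

def IsKTupleDomSet {V : Type*} (G : SimpleGraph V) (k : ℕ) (D : Set V) : Prop :=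
  ∀ v : V, k ≤ (closedNbhd G v ∩ D).ncard

noncomputable def ktupleDomNum {V : Type*} (G : SimpleGraph V) (k : ℕ) : ℕ :=
  sInf {d | ∃ D : Set V, IsKTupleDomSet G k D ∧ D.ncard = d}

def IsUniversal {V : Type*} (G : SimpleGraph V) (u : V) : Prop :=
  ∀ w : V, w ≠ u → G.Adj u w

section

variable {V : Type*} {G : SimpleGraph V} {k : ℕ} {D : Set V}

theorem isUniversal_iff_forall_mem_closedNbhd {u : V} :
    IsUniversal G u ↔ ∀ v, u ∈ closedNbhd G v := by
  refine ⟨fun hu v => ?_, fun hu w hw => ?_⟩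
  · rcases eq_or_ne u v with rfl | huv
    · exact mem_insert u _
    · exact mem_insert_of_mem _ (hu v huv.symm).symm
  · rcases hu w with rfl | hadj
    · exact absurd rfl hw
    · exact hadj.symm

theorem isKTupleDomSet_ncard_self_iff (hD : D.Finite) :
    IsKTupleDomSet G D.ncard D ↔ D ⊆ {u | IsUniversal G u} := by
  simp only [subset_def, mem_ofPred_eq, isUniversal_iff_forall_mem_closedNbhd]
  refine ⟨fun hdom u hu v => ?_, fun hsub v => ?_⟩
  · have hinter : closedNbhd G v ∩ D = D :=
      eq_of_subset_of_ncard_le inter_subset_right (hdom v) hD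
    exact (hinter ▸ hu).1
  · rw [inter_eq_right.mpr fun u hu => hsub u hu v]

theorem IsKTupleDomSet.le_ncard (hdom : IsKTupleDomSet G k D) (hD : D.Finite) (v : V) :
    k ≤ D.ncard :=
  (hdom v).trans (ncard_le_ncard inter_subset_right hD)

theorem ktupleDomNum_le_ncard (hdom : IsKTupleDomSet G k D) : ktupleDomNum G k ≤ D.ncard :=
  Nat.sInf_le ⟨D, hdom, rfl⟩

theorem le_ktupleDomNum [Finite V] (v : V) (hdom : IsKTupleDomSet G k D) :
    k ≤ ktupleDomNum G k :=
  le_csInf ⟨D.ncard, D, hdom, rfl⟩ fun _ ⟨D', hdom', hcard⟩ =>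
    hcard ▸ hdom'.le_ncard D'.toFinite v

theorem exists_isKTupleDomSet_ncard_eq_ktupleDomNum (h : ktupleDomNum G k ≠ 0) :
    ∃ D, IsKTupleDomSet G k D ∧ D.ncard = ktupleDomNum G k :=
  Nat.sInf_mem (Nat.nonempty_of_pos_sInf (Nat.pos_of_ne_zero h))

end

theorem stmt_1_general {V : Type*} [Fintype V] (G : SimpleGraph V) (k : ℕ) :
    ktupleDomNum G k = k ↔ k ≤ {u : V | IsUniversal G u}.ncard := by
  constructor
  · intro h
    rcases Nat.eq_zero_or_pos k with rfl | hk
    · exact Nat.zero_le _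
    obtain ⟨D, hdom, hcard⟩ := exists_isKTupleDomSet_ncard_eq_ktupleDomNum (h ▸ hk.ne')
    rw [h] at hcard
    subst hcard
    exact ncard_le_ncard ((isKTupleDomSet_ncard_self_iff D.toFinite).1 hdom)
  · intro h
    obtain ⟨D, hDU, rfl⟩ := exists_subset_card_eq h
    have hdom := (isKTupleDomSet_ncard_self_iff (G := G) D.toFinite).2 hDU
    refine le_antisymm (ktupleDomNum_le_ncard hdom) ?_
    rcases D.eq_empty_or_nonempty with rfl | ⟨v, -⟩
    · simp
    · exact le_ktupleDomNum v hdom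

theorem stmt_1 {V : Type*} [Fintype V] (G : SimpleGraph V) (k : ℕ) (hk : 0 < k) :
    ktupleDomNum G k = k ↔ k ≤ {u : V | IsUniversal G u}.ncard :=
  stmt_1_general G k
end

section
/- Let G be a co-biconvex graph without universal vertices, with clique partition (C₁, C₂), and let H₁ be the interval graph on vertex set C₁ in which two vertices of C₁ are adjacent if and only if they have a common non-neighbor in C₂. Then a set S ⊆ C₁ is a stable (independent) set of H₁ if and only if S is an (|S|−1)-tuple dominating set of G[C₂], i.e., |N_G[v] ∩ S| ≥ |S|−1 for every v ∈ C₂. -/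
open Set

def auxGraph {V : Type*} (G : SimpleGraph V) (C₁ C₂ : Set V) : SimpleGraph V where
  Adj a b := a ≠ b ∧ a ∈ C₁ ∧ b ∈ C₁ ∧ ∃ v ∈ C₂, ¬ G.Adj v a ∧ ¬ G.Adj v b
  symm := ⟨by rintro a b ⟨h, ha, hb, v, hv, h1, h2⟩; exact ⟨h.symm, hb, ha, v, hv, h2, h1⟩⟩
  loopless := ⟨fun a h => h.1 rfl⟩

def IsStableIn {V : Type*} (H : SimpleGraph V) (S : Set V) : Prop :=
  S.Pairwise fun a b => ¬ H.Adj a b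

noncomputable def indepNumOn {V : Type*} (H : SimpleGraph V) (C : Set V) : ℕ :=
  sSup {d | ∃ S ⊆ C, IsStableIn H S ∧ S.ncard = d}

/-! A vertex `v ∈ C₂` certifies an edge of `H₁` exactly when it misses two vertices of `S`, so
`S` is stable iff each `v ∈ C₂` misses at most one vertex of `S`. As `S ⊆ C₁` avoids `v`, the
vertices of `S` missed by `v` are `S \ N[v]`, and `|S \ N[v]| ≤ 1` is `|N[v] ∩ S| ≥ |S| - 1`. -/

theorem Set.ncard_sub_one_le_ncard_inter_iff {α : Type*} {S : Set α} (hS : S.Finite)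
    (T : Set α) : S.ncard - 1 ≤ (T ∩ S).ncard ↔ (S \ T).Subsingleton := by
  have hsplit := Set.ncard_inter_add_ncard_sdiff_eq_ncard S T hS
  have : Finite ↑(S \ T) := hS.sdiff.to_subtype
  rw [← Set.ncard_le_one_iff_subsingleton, Set.inter_comm]
  omega

section

variable {V : Type*} (G : SimpleGraph V)

theorem sdiff_closedNbhd_eq {S : Set V} {v : V} (hv : v ∉ S) :
    S \ closedNbhd G v = {a ∈ S | ¬ G.Adj v a} := by
  ext a
  simp only [closedNbhd, mem_sdiff, mem_insert_iff, SimpleGraph.mem_neighborSet, not_or,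
    mem_ofPred_eq]
  constructor
  · exact fun ⟨ha, _, hva⟩ => ⟨ha, hva⟩
  · exact fun ⟨ha, hva⟩ => ⟨ha, fun hav => hv (hav ▸ ha), hva⟩

theorem isStableIn_auxGraph_iff {C₁ C₂ S : Set V} (hS : S ⊆ C₁) :
    IsStableIn (auxGraph G C₁ C₂) S ↔ ∀ v ∈ C₂, {a ∈ S | ¬ G.Adj v a}.Subsingleton := by
  constructor
  · intro hstab v hv a ha b hb
    by_contra hne
    exact hstab ha.1 hb.1 hne ⟨hne, hS ha.1, hS hb.1, v, hv, ha.2, hb.2⟩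
  · rintro h a ha b hb hne ⟨-, -, -, v, hv, hva, hvb⟩
    exact hne (h v hv ⟨ha, hva⟩ ⟨hb, hvb⟩)

end

theorem stmt_7_general {V : Type*} [Fintype V] (G : SimpleGraph V) (C₁ C₂ : Set V)
    (hdisj : Disjoint C₁ C₂)
    (S : Set V) (hS : S ⊆ C₁) :
    IsStableIn (auxGraph G C₁ C₂) S ↔
      ∀ v ∈ C₂, S.ncard - 1 ≤ (closedNbhd G v ∩ S).ncard := by
  rw [isStableIn_auxGraph_iff G hS]
  refine forall₂_congr fun v hv => ?_
  have hvS : v ∉ S := fun hvS => disjoint_left.mp hdisj (hS hvS) hv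
  rw [Set.ncard_sub_one_le_ncard_inter_iff S.toFinite, sdiff_closedNbhd_eq G hvS]

theorem stmt_7 {V : Type*} [Fintype V] (G : SimpleGraph V) (C₁ C₂ : Set V)
    (hpart : C₁ ∪ C₂ = Set.univ) (hdisj : Disjoint C₁ C₂)
    (hc1 : G.IsClique C₁) (hc2 : G.IsClique C₂)
    (hnouniv : ∀ v : V, ¬ IsUniversal G v)
    (S : Set V) (hS : S ⊆ C₁) :
    IsStableIn (auxGraph G C₁ C₂) S ↔
      ∀ v ∈ C₂, S.ncard - 1 ≤ (closedNbhd G v ∩ S).ncard :=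
  stmt_7_general G C₁ C₂ hdisj S hS
end

section
/- Let G be a co-biconvex graph without universal vertices with clique partition (C₁, C₂), auxiliary interval graphs H₁, H₂ with independence numbers α₁, α₂. If α₁ + α₂ > k, then γ_{×k}(G) = k + 1. -/
open Set

/-!
For the lower bound: a $k$-tuple dominating set $D$ with $|D| \le k$ lies in every closed
neighbourhood, so each of its vertices is universal. For the upper bound take maximum stable sets
$S_i$ of $H_i$. A vertex $v \in C_1$ sees all of the clique part $S_1$, and two vertices of $S_2$
outside $N[v]$ would be adjacent in $H_2$ through $v$; so $N[v]$ misses at most one vertex of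
$S_1 \cup S_2$, and the same holds for $v \in C_2$. Hence any $k + 1$ of the
$\alpha_1 + \alpha_2 > k$ vertices of $S_1 \cup S_2$ form a $k$-tuple dominating set.
-/

section

variable {V : Type*} {G : SimpleGraph V}

theorem ktupleDomNum_eq_of_isKTupleDomSet {k n : ℕ} {D : Set V}
    (hmin : ∀ D', IsKTupleDomSet G k D' → n ≤ D'.ncard)
    (hD : IsKTupleDomSet G k D) (hDn : D.ncard = n) : ktupleDomNum G k = n :=
  le_antisymm (Nat.sInf_le ⟨D, hD, hDn⟩)
    (le_csInf ⟨n, D, hD, hDn⟩ fun _ ⟨D', hD', h⟩ => h ▸ hmin D' hD')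

theorem IsKTupleDomSet.lt_ncard [Finite V] [Nonempty V] {k : ℕ} {D : Set V}
    (hD : IsKTupleDomSet G k D) (hk : 0 < k) (hnouniv : ∀ v, ¬ IsUniversal G v) :
    k < D.ncard := by
  have hkD : k ≤ D.ncard := (hD (Classical.arbitrary V)).trans (ncard_le_ncard inter_subset_right)
  by_contra! hle
  obtain ⟨u, hu⟩ : D.Nonempty := nonempty_of_ncard_ne_zero (by omega)
  refine hnouniv u fun w hw => ?_
  have hDw : closedNbhd G w ∩ D = D :=
    eq_of_subset_of_ncard_le inter_subset_right (hle.trans (hD w))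
  rcases (hDw.symm ▸ hu : u ∈ closedNbhd G w ∩ D).1 with rfl | hwu
  · exact absurd rfl hw
  · exact hwu.symm

theorem isKTupleDomSet_of_sdiff_closedNbhd_subsingleton [Finite V] {k : ℕ} {D : Set V}
    (hD : ∀ v, (D \ closedNbhd G v).Subsingleton) (hDk : D.ncard = k + 1) :
    IsKTupleDomSet G k D := fun v => by
  have hsplit := ncard_inter_add_ncard_sdiff_eq_ncard D (closedNbhd G v)
  have hout := ncard_le_one_iff_subsingleton.2 (hD v)
  rw [inter_comm]
  omega

theorem SimpleGraph.IsClique.subset_closedNbhd {C : Set V} (hC : G.IsClique C) {v : V}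
    (hv : v ∈ C) : C ⊆ closedNbhd G v := fun u hu => by
  rcases eq_or_ne u v with rfl | huv
  · exact mem_insert u _
  · exact mem_insert_of_mem _ (hC hv hu huv.symm)

theorem IsStableIn.sdiff_closedNbhd_subsingleton {C₁ C₂ S : Set V}
    (hS : S ⊆ C₂) (hst : IsStableIn (auxGraph G C₂ C₁) S) {v : V} (hv : v ∈ C₁) :
    (S \ closedNbhd G v).Subsingleton := by
  intro a ha b hb
  by_contra hab
  exact hst ha.1 hb.1 hab ⟨hab, hS ha.1, hS hb.1, v, hv,
    fun h => ha.2 (mem_insert_of_mem _ h), fun h => hb.2 (mem_insert_of_mem _ h)⟩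

theorem union_sdiff_closedNbhd_subsingleton {C₁ C₂ S₁ S₂ : Set V}
    (hpart : C₁ ∪ C₂ = univ) (hc1 : G.IsClique C₁) (hc2 : G.IsClique C₂)
    (hS₁ : S₁ ⊆ C₁) (hst₁ : IsStableIn (auxGraph G C₁ C₂) S₁)
    (hS₂ : S₂ ⊆ C₂) (hst₂ : IsStableIn (auxGraph G C₂ C₁) S₂) (v : V) :
    ((S₁ ∪ S₂) \ closedNbhd G v).Subsingleton := by
  rcases (hpart ▸ mem_univ v : v ∈ C₁ ∪ C₂) with hv | hv
  · refine (hst₂.sdiff_closedNbhd_subsingleton hS₂ hv).anti ?_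
    rw [union_sdiff_distrib, sdiff_eq_empty.2 (hS₁.trans (hc1.subset_closedNbhd hv)), empty_union]
  · refine (hst₁.sdiff_closedNbhd_subsingleton hS₁ hv).anti ?_
    rw [union_sdiff_distrib, sdiff_eq_empty.2 (hS₂.trans (hc2.subset_closedNbhd hv)), union_empty]

theorem exists_isStableIn_ncard_eq_indepNumOn [Finite V] (H : SimpleGraph V) (C : Set V) :
    ∃ S ⊆ C, IsStableIn H S ∧ S.ncard = indepNumOn H C :=
  Nat.sSup_mem (s := {d | ∃ S ⊆ C, IsStableIn H S ∧ S.ncard = d})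
    ⟨0, ∅, empty_subset C, pairwise_empty _, ncard_empty V⟩
    ⟨Nat.card V, fun _ ⟨S, _, _, hS⟩ => hS ▸ ncard_le_card S⟩

end

theorem stmt_9_general {V : Type*} [Fintype V] (G : SimpleGraph V) (C₁ C₂ : Set V)
    (hpart : C₁ ∪ C₂ = Set.univ) (hdisj : Disjoint C₁ C₂)
    (hne1 : C₁.Nonempty)
    (hc1 : G.IsClique C₁) (hc2 : G.IsClique C₂)
    (hnouniv : ∀ v : V, ¬ IsUniversal G v)
    (k : ℕ) (hk : 0 < k)
    (hsum : k < indepNumOn (auxGraph G C₁ C₂) C₁ + indepNumOn (auxGraph G C₂ C₁) C₂) :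
    ktupleDomNum G k = k + 1 := by
  have : Nonempty V := ⟨hne1.some⟩
  obtain ⟨S₁, hS₁, hst₁, hα₁⟩ :=
    exists_isStableIn_ncard_eq_indepNumOn (auxGraph G C₁ C₂) C₁
  obtain ⟨S₂, hS₂, hst₂, hα₂⟩ :=
    exists_isStableIn_ncard_eq_indepNumOn (auxGraph G C₂ C₁) C₂
  have hcard : k + 1 ≤ (S₁ ∪ S₂).ncard := by
    rw [ncard_union_eq (hdisj.mono hS₁ hS₂), hα₁, hα₂]
    exact hsum
  obtain ⟨D, hDS, hDk⟩ := exists_subset_card_eq hcard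
  have hD : IsKTupleDomSet G k D := isKTupleDomSet_of_sdiff_closedNbhd_subsingleton
    (fun v => (union_sdiff_closedNbhd_subsingleton hpart hc1 hc2 hS₁ hst₁ hS₂ hst₂ v).anti
      (sdiff_subset_sdiff_left hDS)) hDk
  exact ktupleDomNum_eq_of_isKTupleDomSet (fun D' hD' => hD'.lt_ncard hk hnouniv) hD hDk

theorem stmt_9 {V : Type*} [Fintype V] (G : SimpleGraph V) (C₁ C₂ : Set V)
    (hpart : C₁ ∪ C₂ = Set.univ) (hdisj : Disjoint C₁ C₂)
    (hne1 : C₁.Nonempty) (hne2 : C₂.Nonempty)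
    (hc1 : G.IsClique C₁) (hc2 : G.IsClique C₂)
    (hnouniv : ∀ v : V, ¬ IsUniversal G v)
    (k : ℕ) (hk : 0 < k)
    (hsum : k < indepNumOn (auxGraph G C₁ C₂) C₁ + indepNumOn (auxGraph G C₂ C₁) C₂) :
    ktupleDomNum G k = k + 1 :=
  stmt_9_general G C₁ C₂ hpart hdisj hne1 hc1 hc2 hnouniv k hk hsum
end

section
/- For every web graph W_n^m with n ≥ 2m+1, writing μ = gcd(2m+1, n) and l₂ = (2m+1)/μ, the l₂-tuple domination number satisfies γ_{×l₂}(W_n^m) = n/μ. -/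
open Set

def webGraph (n m : ℕ) : SimpleGraph (ZMod n) where
  Adj i j := i ≠ j ∧ ∃ l : ℕ, 1 ≤ l ∧ l ≤ m ∧ (j = i + (l : ZMod n) ∨ j = i - (l : ZMod n))
  symm := ⟨by
    rintro i j ⟨hne, l, h1, h2, h3 | h3⟩
    · exact ⟨hne.symm, l, h1, h2, Or.inr (by rw [h3]; ring)⟩
    · exact ⟨hne.symm, l, h1, h2, Or.inl (by rw [h3]; ring)⟩⟩
  loopless := ⟨fun i h => h.1 rfl⟩

/-!
Every closed neighbourhood of `W_n^m` is a window of `2m+1 = μ l₂` consecutive residues, and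
a window of `μ j` consecutive residues contains exactly `j` multiples of `μ`; so the `n / μ`
multiples of `μ` form an `l₂`-tuple dominating set. Conversely, double counting the pairs
`(v, x)` with `x ∈ N[v] ∩ D` gives `n l₂ ≤ |D| (2m+1) = |D| μ l₂` for any `l₂`-tuple
dominating set `D`.
-/

open Finset in
theorem Int.card_filter_Ico_intCast_eq {μ : ℕ} (hμ : 0 < μ) (a : ℤ) (k : ℕ) (c : ZMod μ) :
    #{t ∈ Finset.Ico a (a + μ * k) | ((t : ℤ) : ZMod μ) = c} = k := by
  have key :=
    Int.Ico_filter_modEq_card a (a + μ * k) (r := μ) (by exact_mod_cast hμ) (c.cast : ℤ)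
  simp only [← ZMod.intCast_eq_intCast_iff, ZMod.intCast_zmod_cast] at key
  have hq : ((a + μ * k : ℤ) - (c.cast : ℤ) : ℚ) / (μ : ℤ) =
      (a - (c.cast : ℤ) : ℚ) / (μ : ℤ) + k := by
    push_cast; field_simp; ring
  rw [hq, Int.ceil_add_natCast, add_sub_cancel_left, max_eq_left (by positivity)] at key
  exact_mod_cast key

namespace ZMod

variable {n : ℕ}

theorem injOn_add_intCast_Ico (v : ZMod n) (a : ℤ) {k : ℕ} (hk : k ≤ n) :
    InjOn (fun t : ℤ => v + (t : ZMod n)) (Ico a (a + k)) := by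
  intro s ⟨hs₁, hs₂⟩ t ⟨ht₁, ht₂⟩ hst
  have hdvd : (n : ℤ) ∣ t - s :=
    ((intCast_eq_intCast_iff _ _ _).mp (add_left_cancel hst)).dvd
  have := Int.eq_zero_of_abs_lt_dvd hdvd (by rw [abs_lt]; omega)
  omega

theorem image_add_intCast_Ico_eq_univ [NeZero n] (v : ZMod n) (a : ℤ) :
    (fun t : ℤ => v + (t : ZMod n)) '' Ico a (a + n) = univ := by
  refine eq_of_subset_of_ncard_le (subset_univ _) ?_
  rw [ncard_univ, Nat.card_zmod, (injOn_add_intCast_Ico v a le_rfl).ncard_image,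
    ← Finset.coe_Ico, ncard_coe_finset, Int.card_Ico]
  omega

theorem ncard_image_add_intCast_Ico_inter_ker {μ k : ℕ} (hμ : μ ∣ n) (hμk : μ ∣ k)
    (hk : k ≤ n) (v : ZMod n) (a : ℤ) :
    ((fun t : ℤ => v + (t : ZMod n)) '' Ico a (a + k) ∩
      RingHom.ker (castHom hμ (ZMod μ))).ncard = k / μ := by
  obtain ⟨j, rfl⟩ := hμk
  rcases Nat.eq_zero_or_pos μ with rfl | hμpos
  · simp
  rw [← image_inter_preimage, ((injOn_add_intCast_Ico v a hk).mono inter_subset_left).ncard_image,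
    Nat.mul_div_cancel_left _ hμpos]
  have hfilter : Ico a (a + (μ * j : ℕ)) ∩ (fun t : ℤ => v + (t : ZMod n)) ⁻¹'
      RingHom.ker (castHom hμ (ZMod μ)) =
      ↑{t ∈ Finset.Ico a (a + μ * j) | ((t : ℤ) : ZMod μ) = -castHom hμ (ZMod μ) v} := by
    ext t
    simp only [mem_inter_iff, mem_preimage, SetLike.mem_coe, RingHom.mem_ker, map_add, map_intCast,
      Finset.coe_filter, Finset.mem_Ico, mem_ofPred_eq, mem_Ico, eq_neg_iff_add_eq_zero, add_comm,
      Nat.cast_mul]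
  rw [hfilter, ncard_coe_finset, Int.card_filter_Ico_intCast_eq hμpos]

end ZMod

section Domination

variable {V : Type*} {G : SimpleGraph V}

theorem mem_closedNbhd_comm {v x : V} : x ∈ closedNbhd G v ↔ v ∈ closedNbhd G x := by
  simp only [closedNbhd, mem_insert_iff, SimpleGraph.mem_neighborSet, G.adj_comm, eq_comm]

theorem IsKTupleDomSet.card_mul_le [Fintype V] {k r : ℕ}
    (hr : ∀ v, (closedNbhd G v).ncard = r) {D : Set V} (hD : IsKTupleDomSet G k D) :
    Fintype.card V * k ≤ D.ncard * r := by
  classical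
  let rel : V → V → Prop := fun v x => x ∈ closedNbhd G v
  have hbelow : ∀ x, (Finset.univ.bipartiteBelow rel x).card = r := fun x => by
    rw [← hr x, ← ncard_coe_finset]
    congr 1
    ext v
    simp [Finset.bipartiteBelow, rel, mem_closedNbhd_comm (v := v)]
  calc Fintype.card V * k = ∑ _v : V, k := by simp
    _ ≤ ∑ v : V, (D.toFinset.bipartiteAbove rel v).card :=
        Finset.sum_le_sum fun v _ => (hD v).trans_eq <| by
        rw [← ncard_coe_finset]
        congr 1
        ext x
        simp [Finset.bipartiteAbove, rel, and_comm]
    _ = ∑ x ∈ D.toFinset, (Finset.univ.bipartiteBelow rel x).card :=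
        Finset.sum_card_bipartiteAbove_eq_sum_card_bipartiteBelow _
    _ = D.ncard * r := by simp [hbelow, ncard_eq_toFinset_card']

theorem ktupleDomNum_eq {k : ℕ} {D : Set V} (hD : IsKTupleDomSet G k D)
    (hmin : ∀ D', IsKTupleDomSet G k D' → D.ncard ≤ D'.ncard) :
    ktupleDomNum G k = D.ncard :=
  le_antisymm (Nat.sInf_le ⟨D, hD, rfl⟩)
    (le_csInf ⟨_, D, hD, rfl⟩ fun _ ⟨D', hD', h⟩ => h ▸ hmin D' hD')

end Domination

theorem webGraph_closedNbhd (n m : ℕ) (v : ZMod n) :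
    closedNbhd (webGraph n m) v =
      (fun t : ℤ => v + (t : ZMod n)) '' Ico (-(m : ℤ)) (-(m : ℤ) + (2 * m + 1 : ℕ)) := by
  ext x
  constructor
  · rintro (rfl | ⟨-, l, hl₁, hl₂, rfl | rfl⟩)
    · exact ⟨0, by rw [mem_Ico]; omega, by simp⟩
    · exact ⟨l, by rw [mem_Ico]; omega, by simp⟩
    · exact ⟨-l, by rw [mem_Ico]; omega, by simp [sub_eq_add_neg]⟩
  · rintro ⟨t, ⟨ht₁, ht₂⟩, rfl⟩
    by_cases hv : v + (t : ZMod n) = v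
    · exact Or.inl hv
    refine Or.inr ⟨Ne.symm hv, t.natAbs, ?_, by omega, ?_⟩
    · by_contra h
      have ht : t = 0 := by omega
      exact hv (by simp [ht])
    · rcases Int.natAbs_eq t with h | h <;> rw [h] <;> simp [sub_eq_add_neg]

theorem webGraph_ncard_closedNbhd {n m : ℕ} (hn : 2 * m + 1 ≤ n) (v : ZMod n) :
    (closedNbhd (webGraph n m) v).ncard = 2 * m + 1 := by
  rw [webGraph_closedNbhd, (ZMod.injOn_add_intCast_Ico v _ hn).ncard_image, ← Finset.coe_Ico,
    ncard_coe_finset, Int.card_Ico]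
  omega

theorem stmt_17_general (n m : ℕ) (hn : 2 * m + 1 ≤ n)
    (μ l₂ : ℕ) (hμ : μ = Nat.gcd (2 * m + 1) n) (hl : l₂ = (2 * m + 1) / μ) :
    ktupleDomNum (webGraph n m) l₂ = n / μ := by
  have : NeZero n := ⟨by omega⟩
  have hμn : μ ∣ n := hμ ▸ Nat.gcd_dvd_right _ _
  have hμm : μ ∣ 2 * m + 1 := hμ ▸ Nat.gcd_dvd_left _ _
  have hμpos : 0 < μ := Nat.pos_of_dvd_of_pos hμm (by omega)
  have hl₂pos : 0 < l₂ := hl ▸ Nat.div_pos (Nat.le_of_dvd (by omega) hμm) hμpos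
  set D : Set (ZMod n) := ↑(RingHom.ker (ZMod.castHom hμn (ZMod μ)))
  have hDcard : D.ncard = n / μ := by
    have h := ZMod.ncard_image_add_intCast_Ico_inter_ker hμn hμn le_rfl 0 0
    rwa [ZMod.image_add_intCast_Ico_eq_univ, univ_inter] at h
  have hD : IsKTupleDomSet (webGraph n m) l₂ D := fun v => by
    rw [webGraph_closedNbhd, ZMod.ncard_image_add_intCast_Ico_inter_ker hμn hμm hn, hl]
  rw [← hDcard]
  refine ktupleDomNum_eq hD fun D' hD' => hDcard ▸ Nat.div_le_of_le_mul ?_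
  have hcount : n * l₂ ≤ D'.ncard * μ * l₂ := by
    have h := hD'.card_mul_le (webGraph_ncard_closedNbhd hn)
    rwa [ZMod.card, ← Nat.mul_div_cancel' hμm, ← hl, ← mul_assoc] at h
  exact (Nat.le_of_mul_le_mul_right hcount hl₂pos).trans_eq (mul_comm _ _)

theorem stmt_17 (n m : ℕ) (hm : 0 < m) (hn : 2 * m + 1 ≤ n)
    (μ l₂ : ℕ) (hμ : μ = Nat.gcd (2 * m + 1) n) (hl : l₂ = (2 * m + 1) / μ) :
    ktupleDomNum (webGraph n m) l₂ = n / μ :=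
  stmt_17_general n m hn μ l₂ hμ hl
end
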